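/- If each of the 10 utility functions f_i : ℕ → ℝ≥0 is monotonically nonincreasing, then for any fixed caching pattern (which items are cached in which slots), total utility is maximized over update patterns (respecting per-slot backhaul capacity) by a schedule in which no update is ever 'wasted': replacing any update of a cached item by no update never increases total utility. -/

import Mathlib

/-- Age induced by an update indicator: `0` in an updated slot, else previous + 1. -/
def updAge (u : ℕ → Bool) : ℕ → ℕ
  | 0 => 0
  | t + 1 => if u (t + 1) then 0 else updAge u t + 1

theorem antitone_updAge : Antitone updAge := by
  intro u u' huu' t
  induction t with
  | zero => rfl
  | succ t ih =>
    replace ih : updAge u' t ≤ updAge u t := ih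
    simp only [updAge]
    cases hu' : u' (t + 1)
    · have hu : u (t + 1) = false := by simpa [hu'] using Bool.le_iff_imp.mp (huu' (t + 1))
      simpa [hu] using ih
    · simp

theorem more_updates_never_hurt_general
    (ι : Type*) [Fintype ι] (T : ℕ)
    (f : ι → ℕ → ℝ)
    (hmono : ∀ i a a', a ≤ a' → f i a' ≤ f i a)
    (b u u' : ι → ℕ → Bool)
    (hle : ∀ i t, u i t = true → u' i t = true) :
    ∑ t ∈ Finset.Icc 1 T, ∑ i, (if b i t then f i (updAge (u i) t) else 0)
      ≤ ∑ t ∈ Finset.Icc 1 T, ∑ i, (if b i t then f i (updAge (u' i) t) else 0) := by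
  gcongr with t _ i
  split_ifs
  · exact hmono i _ _ (antitone_updAge (fun t => Bool.le_iff_imp.mpr (hle i t)) t)
  · rfl

/-- With nonincreasing, nonnegative utilities and a fixed caching
pattern `b`, updating more never hurts: if `u ≤ u'` pointwise and both update
patterns are feasible (updates only of cached items, per-slot backhaul capacity
respected), then total utility under `u` is at most total utility under `u'`. -/
theorem more_updates_never_hurt
    (ι : Type*) [Fintype ι] (T : ℕ)
    (f : ι → ℕ → ℝ)
    (hmono : ∀ i a a', a ≤ a' → f i a' ≤ f i a)
    (hnn : ∀ i a, 0 ≤ f i a)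
    (s : ι → ℝ) (L : ℝ)
    (b u u' : ι → ℕ → Bool)
    (hub : ∀ i t, u i t = true → b i t = true)
    (hub' : ∀ i t, u' i t = true → b i t = true)
    (hfeas : ∀ t, ∑ i, (if u i t then s i else 0) ≤ L)
    (hfeas' : ∀ t, ∑ i, (if u' i t then s i else 0) ≤ L)
    (hle : ∀ i t, u i t = true → u' i t = true) :
    ∑ t ∈ Finset.Icc 1 T, ∑ i, (if b i t then f i (updAge (u i) t) else 0)
      ≤ ∑ t ∈ Finset.Icc 1 T, ∑ i, (if b i t then f i (updAge (u' i) t) else 0) :=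
  more_updates_never_hurt_general ι T f hmono b u u' hle
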